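/- arXiv:1912.03074 — 3 statements merged into one kernel-verified Lean document; each statement's English description precedes it below -/
import Mathlib

section
/- Let K, L be positive integers and let u ∈ [0,1]^K, v ∈ [0,1]^L be nonzero vectors such that either all entries of u are positive or all entries of v are positive, and such that there are indices i* and j* with u_{i*} > u_i for all i ≠ i* and v_{j*} > v_j for all j ≠ j*. Set μ_{(i,j)} = u_i v_j. Then for every (i,j) ≠ (i*,j*): either (i,j) is adjacent to (i*,j*) in G1 and μ_{(i,j)} < μ_{(i*,j*)}, or there exists a vertex m ∈ [K]×[L] adjacent in G1 to both (i,j) and (i*,j*) such that μ_{(i,j)} < μ_m < μ_{(i*,j*)}; that is, there is a strictly increasing path of length at most two from (i,j) to (i*,j*). -/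
/-- Adjacency in the graph `G1` on `[K] × [L]`: two distinct entries are neighbors
iff they share a row or a column. -/
def G1Adj {K L : ℕ} (p q : Fin K × Fin L) : Prop :=
  p ≠ q ∧ (p.1 = q.1 ∨ p.2 = q.2)

/-- In a rank-one bandit instance with `u ≻ 0` or `v ≻ 0` and unique best row and
column, from every suboptimal entry there is a strictly increasing path of length
at most two in `G1` to the best entry `(i⋆, j⋆)`: either the entry is a neighbor of
`(i⋆, j⋆)` (with smaller mean), or it has a common neighbor `m` with
`μ (i,j) < μ m < μ (i⋆, j⋆)`. -/
theorem rank_one_increasing_path_length_two (K L : ℕ) (hK : 0 < K) (hL : 0 < L)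
    (u : Fin K → ℝ) (v : Fin L → ℝ)
    (hu : ∀ i, u i ∈ Set.Icc (0 : ℝ) 1) (hv : ∀ j, v j ∈ Set.Icc (0 : ℝ) 1)
    (hu0 : u ≠ 0) (hv0 : v ≠ 0)
    (hpos : (∀ i, 0 < u i) ∨ (∀ j, 0 < v j))
    (istar : Fin K) (jstar : Fin L)
    (hiu : ∀ i, i ≠ istar → u i < u istar)
    (hjv : ∀ j, j ≠ jstar → v j < v jstar) :
    ∀ p : Fin K × Fin L, p ≠ (istar, jstar) →
      (G1Adj p (istar, jstar) ∧ u p.1 * v p.2 < u istar * v jstar) ∨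
      (∃ m : Fin K × Fin L, G1Adj p m ∧ G1Adj m (istar, jstar) ∧
        u p.1 * v p.2 < u m.1 * v m.2 ∧ u m.1 * v m.2 < u istar * v jstar) := by
  -- u istar > 0
  have hust : 0 < u istar := by
    obtain ⟨i, hi⟩ : ∃ i, u i ≠ 0 := by
      by_contra h
      push_neg at h
      exact hu0 (funext h)
    have hi' : 0 < u i := lt_of_le_of_ne (hu i).1 (Ne.symm hi)
    by_cases h : i = istar
    · exact h ▸ hi'
    · exact hi'.trans (hiu i h)
  have hvst : 0 < v jstar := by
    obtain ⟨j, hj⟩ : ∃ j, v j ≠ 0 := by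
      by_contra h
      push_neg at h
      exact hv0 (funext h)
    have hj' : 0 < v j := lt_of_le_of_ne (hv j).1 (Ne.symm hj)
    by_cases h : j = jstar
    · exact h ▸ hj'
    · exact hj'.trans (hjv j h)
  rintro ⟨i, j⟩ hp
  by_cases hi : i = istar
  · -- same row, so j ≠ jstar
    subst hi
    have hj : j ≠ jstar := by
      intro h; exact hp (by rw [h])
    left
    refine ⟨⟨hp, Or.inl rfl⟩, ?_⟩
    exact mul_lt_mul_of_pos_left (hjv j hj) hust
  · by_cases hj : j = jstar
    · subst hj
      left
      refine ⟨⟨hp, Or.inr rfl⟩, ?_⟩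
      exact mul_lt_mul_of_pos_right (hiu i hi) hvst
    · right
      rcases hpos with hposu | hposv
      · -- take m = (i, jstar)
        refine ⟨(i, jstar), ⟨?_, Or.inl rfl⟩, ⟨?_, Or.inr rfl⟩, ?_, ?_⟩
        · simp [Prod.ext_iff, hj]
        · simp [Prod.ext_iff, hi]
        · exact mul_lt_mul_of_pos_left (hjv j hj) (hposu i)
        · exact mul_lt_mul_of_pos_right (hiu i hi) hvst
      · -- take m = (istar, j)
        refine ⟨(istar, j), ⟨?_, Or.inr rfl⟩, ⟨?_, Or.inl rfl⟩, ?_, ?_⟩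
        · simp [Prod.ext_iff, hi]
        · simp [Prod.ext_iff, hj]
        · exact mul_lt_mul_of_pos_right (hiu i hi) (hposv j)
        · exact mul_lt_mul_of_pos_left (hjv j hj) hust
end

section
/- (Posterior concentration used in the analysis of UTS.) Let u be a positive integer, let s ∈ {0,1,…,u}, and let δ > 0 be such that s/u + δ/2 ≤ 1. If θ is a random variable with the Beta(s+1, u−s+1) distribution, then P(θ ≥ s/u + δ/2) ≤ exp(−u δ²/2); equivalently, ((u+1)!/(s!(u−s)!)) · ∫_{s/u+δ/2}^{1} t^{s} (1−t)^{u−s} dt ≤ exp(−u δ²/2). -/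
/-!
Integrating by parts in `s` identifies the normalized Beta tail with a binomial lower tail,
`(u+1)!/(s!(u-s)!) ∫ₓ¹ tˢ(1-t)^(u-s) dt = P(Bin(u+1, x) ≤ s)`.
That tail obeys the Chernoff–Hoeffding bound: tilting by `e^{λ(s-j)} ≥ 1` and Hoeffding's
lemma for a Bernoulli variable give `P(Bin(n, x) ≤ s) ≤ exp(-2n(x-q)²)` whenever `s ≤ nq`
and `q ≤ x`.
With `n = u+1`, `q = s/u` and `x = q + δ/2` the exponent is `-(u+1)δ²/2 ≤ -uδ²/2`.
-/

open Nat Real Finset ProbabilityTheory MeasureTheory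

noncomputable def binomialCDF (n : ℕ) (x : ℝ) (s : ℕ) : ℝ :=
  ∑ j ∈ range (s + 1), (n.choose j : ℝ) * x ^ j * (1 - x) ^ (n - j)

lemma integral_one_sub_pow (x : ℝ) (m : ℕ) :
    (m + 1) * ∫ t in x..1, (1 - t) ^ m = (1 - x) ^ (m + 1) := by
  have hderiv (t : ℝ) : HasDerivAt (fun t => (1 - t) ^ (m + 1)) (-((m + 1) * (1 - t) ^ m)) t := by
    simpa using ((hasDerivAt_id t).const_sub 1).fun_pow (m + 1)
  have hftc := intervalIntegral.integral_eq_sub_of_hasDerivAt (a := x) (b := 1)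
    (fun t _ => hderiv t) (by apply Continuous.intervalIntegrable; fun_prop)
  rw [intervalIntegral.integral_neg, intervalIntegral.integral_const_mul, sub_self,
    zero_pow (succ_ne_zero m)] at hftc
  linarith

lemma integral_pow_succ_mul_one_sub_pow (x : ℝ) (s m : ℕ) :
    (m + 1) * ∫ t in x..1, t ^ (s + 1) * (1 - t) ^ m =
      x ^ (s + 1) * (1 - x) ^ (m + 1) + (s + 1) * ∫ t in x..1, t ^ s * (1 - t) ^ (m + 1) := by
  have hderiv (t : ℝ) : HasDerivAt (fun t => t ^ (s + 1) * (1 - t) ^ (m + 1))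
      ((s + 1) * (t ^ s * (1 - t) ^ (m + 1)) - (m + 1) * (t ^ (s + 1) * (1 - t) ^ m)) t := by
    refine ((hasDerivAt_pow (s + 1) t).fun_mul
      (((hasDerivAt_id t).const_sub 1).fun_pow (m + 1))).congr_deriv ?_
    simp only [id, Nat.add_sub_cancel]
    push_cast
    ring
  have hftc := intervalIntegral.integral_eq_sub_of_hasDerivAt (a := x) (b := 1)
    (fun t _ => hderiv t) (by apply Continuous.intervalIntegrable; fun_prop)
  rw [intervalIntegral.integral_sub, intervalIntegral.integral_const_mul,
    intervalIntegral.integral_const_mul, one_pow, sub_self, zero_pow (succ_ne_zero m),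
    mul_zero] at hftc
  · linarith
  all_goals apply Continuous.intervalIntegrable; fun_prop

lemma factorial_mul_integral_pow_mul_one_sub_pow (x : ℝ) (s m : ℕ) :
    ((s + m + 1)! : ℝ) * ∫ t in x..1, t ^ s * (1 - t) ^ m =
      s ! * m ! * binomialCDF (s + m + 1) x s := by
  induction s generalizing m with
  | zero =>
    rw [zero_add, Nat.factorial_succ, binomialCDF, sum_range_one]
    simp only [pow_zero, one_mul, Nat.choose_zero_right, Nat.factorial_zero, Nat.sub_zero]
    push_cast
    linear_combination (m ! : ℝ) * integral_one_sub_pow x m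
  | succ s ih =>
    have hibp := integral_pow_succ_mul_one_sub_pow x s m
    have ih' := ih (m + 1)
    rw [show s + (m + 1) + 1 = s + 1 + m + 1 by omega] at ih'
    have hchoose :
        ((s + 1 + m + 1).choose (s + 1) : ℝ) * (s + 1)! * (m + 1)! = (s + 1 + m + 1)! := by
      have h := Nat.choose_mul_factorial_mul_factorial (show s + 1 ≤ s + 1 + m + 1 by omega)
      rw [show s + 1 + m + 1 - (s + 1) = m + 1 by omega] at h
      exact_mod_cast h
    rw [binomialCDF, sum_range_succ, ← binomialCDF,
      show s + 1 + m + 1 - (s + 1) = m + 1 by omega]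
    apply mul_left_cancel₀ (show (m + 1 : ℝ) ≠ 0 by positivity)
    rw [Nat.factorial_succ s] at hchoose ⊢
    rw [Nat.factorial_succ m] at hchoose ih'
    push_cast at hchoose ih' ⊢
    linear_combination ((s + 1 + m + 1)! : ℝ) * hibp + (s + 1) * ih'
      - x ^ (s + 1) * (1 - x) ^ (m + 1) * hchoose

lemma one_sub_add_mul_exp_le_exp {x : ℝ} (hx0 : 0 ≤ x) (hx1 : x ≤ 1) (t : ℝ) :
    1 - x + x * exp t ≤ exp (t * x + t ^ 2 / 8) := by
  let p : unitInterval := ⟨x, hx0, hx1⟩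
  have hbounded : ∀ᵐ ω ∂bernoulliMeasure (1 : ℝ) 0 p, ω ∈ Set.Icc (0 : ℝ) 1 := by
    refine ae_iff.2 (bernoulliMeasure_apply_of_notMem_of_notMem p measurableSet_Icc.compl ?_ ?_)
      <;> simp
  have hoeffding := (hasSubgaussianMGF_of_mem_Icc (X := id) aemeasurable_id hbounded).mgf_le t
  norm_num [mgf, integral_bernoulliMeasure, p] at hoeffding
  calc 1 - x + x * exp t
      = exp (t * x) * (x * exp (t * (1 - x)) + (1 - x) * exp (-(t * x))) := by
        have h1 : exp (t * x) * exp (t * (1 - x)) = exp t := by rw [← exp_add]; ring_nf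
        have h2 : exp (t * x) * exp (-(t * x)) = 1 := by rw [← exp_add, add_neg_cancel, exp_zero]
        linear_combination -x * h1 - (1 - x) * h2
    _ ≤ exp (t * x) * exp (1 / 4 * t ^ 2 / 2) := by gcongr
    _ = exp (t * x + t ^ 2 / 8) := by rw [← exp_add]; ring_nf

lemma binomialCDF_le_exp_mul {n s : ℕ} (hs : s ≤ n) {x : ℝ} (hx0 : 0 ≤ x) (hx1 : x ≤ 1)
    {t : ℝ} (ht : 0 ≤ t) :
    binomialCDF n x s ≤ exp (t * s) * (1 - x + x * exp (-t)) ^ n := by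
  have hterm (j : ℕ) : 0 ≤ (n.choose j : ℝ) * x ^ j * (1 - x) ^ (n - j) := by
    have : 0 ≤ 1 - x := by linarith
    positivity
  calc binomialCDF n x s
      ≤ ∑ j ∈ range (s + 1),
          (n.choose j : ℝ) * x ^ j * (1 - x) ^ (n - j) * exp (t * (s - j)) := by
        refine sum_le_sum fun j hj => le_mul_of_one_le_right (hterm j) (one_le_exp ?_)
        have : (j : ℝ) ≤ s := by exact_mod_cast Nat.lt_succ_iff.1 (mem_range.1 hj)
        nlinarith
    _ ≤ ∑ j ∈ range (n + 1),
          (n.choose j : ℝ) * x ^ j * (1 - x) ^ (n - j) * exp (t * (s - j)) :=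
        sum_le_sum_of_subset_of_nonneg (range_subset_range.2 (by omega))
          fun j _ _ => mul_nonneg (hterm j) (exp_pos _).le
    _ = exp (t * s) * (x * exp (-t) + (1 - x)) ^ n := by
        rw [add_pow, mul_sum]
        refine sum_congr rfl fun j _ => ?_
        have : exp (t * (s - j)) = exp (t * s) * exp (-t) ^ j := by
          rw [← exp_nat_mul, ← exp_add]; ring_nf
        rw [this]
        ring
    _ = exp (t * s) * (1 - x + x * exp (-t)) ^ n := by ring

lemma binomialCDF_le_exp_neg_sq {n s : ℕ} (hs : s ≤ n) {q x : ℝ} (hsq : (s : ℝ) ≤ n * q)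
    (hqx : q ≤ x) (hx0 : 0 ≤ x) (hx1 : x ≤ 1) :
    binomialCDF n x s ≤ exp (-2 * n * (x - q) ^ 2) := by
  set t := 4 * (x - q)
  have ht : 0 ≤ t := by linarith
  calc binomialCDF n x s ≤ exp (t * s) * (1 - x + x * exp (-t)) ^ n :=
        binomialCDF_le_exp_mul hs hx0 hx1 ht
    _ ≤ exp (t * s) * exp (-t * x + (-t) ^ 2 / 8) ^ n := by
        gcongr
        exact one_sub_add_mul_exp_le_exp hx0 hx1 (-t)
    _ = exp (t * (s - n * x) + n * t ^ 2 / 8) := by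
        rw [← exp_nat_mul, ← exp_add]; ring_nf
    _ ≤ exp (-2 * n * (x - q) ^ 2) := by
        gcongr
        nlinarith

/-- Posterior concentration for Beta posteriors: if `θ ∼ Beta(s+1, u−s+1)` with
`s ≤ u` observed successes out of `u` samples, then the posterior probability that
`θ` exceeds the empirical mean `s/u` by more than `δ/2` is at most `exp(−u δ²/2)`. -/
theorem beta_posterior_concentration (u : ℕ) (hu : 0 < u) (s : ℕ) (hs : s ≤ u)
    (δ : ℝ) (hδ : 0 < δ) (hle : (s : ℝ) / u + δ / 2 ≤ 1) :
    ((u + 1)! : ℝ) / ((s)! * (u - s)!) *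
        ∫ t in ((s : ℝ) / u + δ / 2)..(1 : ℝ), t ^ s * (1 - t) ^ (u - s) ≤
      Real.exp (-(u : ℝ) * δ ^ 2 / 2) := by
  set q : ℝ := s / u
  have hu' : (0 : ℝ) < u := by exact_mod_cast hu
  have hbinomial : ((u + 1)! : ℝ) / (s ! * (u - s)!) *
      ∫ t in (q + δ / 2)..1, t ^ s * (1 - t) ^ (u - s) = binomialCDF (u + 1) (q + δ / 2) s := by
    have h := factorial_mul_integral_pow_mul_one_sub_pow (q + δ / 2) s (u - s)
    rw [show s + (u - s) + 1 = u + 1 by omega] at h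
    rw [div_mul_eq_mul_div, h]
    field_simp
  have hsq : (s : ℝ) ≤ ((u + 1 : ℕ) : ℝ) * q := by
    have : ((u + 1 : ℕ) : ℝ) * q = s + q := by
      push_cast
      rw [add_mul, one_mul, mul_div_cancel₀ _ hu'.ne']
    rw [this]
    linarith [show 0 ≤ q by positivity]
  calc _ = binomialCDF (u + 1) (q + δ / 2) s := hbinomial
    _ ≤ exp (-2 * ((u + 1 : ℕ) : ℝ) * (q + δ / 2 - q) ^ 2) :=
        binomialCDF_le_exp_neg_sq (by omega) hsq (by linarith) (by positivity) hle
    _ ≤ exp (-(u : ℝ) * δ ^ 2 / 2) := by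
        gcongr
        push_cast
        nlinarith [sq_nonneg δ]
end

section
/- Let μ1, μ2 ∈ [0,1] and δ > 0 be such that 0 < μ2 + δ < μ1. There exists λ0 = λ0(μ1, μ2, δ) > 1 such that for every λ ∈ (1, λ0) there exist constants C > 0 and d > 0 (depending on λ, μ1, μ2, δ) with the following property: for every positive integer j and every real x ≥ 1, if X is a Binomial(j, μ1) random variable then E[(1 − F^Bin_{j+1, μ2+δ}(X))^x] ≤ α^x + C · exp(−j d)/x^λ, where α = (1/2)^{1−μ2−δ}. -/
/-!
Write `p = μ₂ + δ`, `T s = P(X = s)` and `G s = 1 - F^Bin_{j+1,p}(s)`. Chernoff's bound with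
tilt `a / p`, for some `a ∈ (p, 1)`, gives `G s ≤ α` unless `s ≤ a j + c` for a constant `c`;
those terms contribute at most `α^x`. For the remaining `s`, `(1 - F)^x ≤ exp (-F x) ≤
(λ / (F x))^λ`, and bounding `F` below by the single atom `P(Bin(j+1, p) = s)` gives
`T s F^(-λ) ≤ (1 - p)^(-λ) u^s v^(j-s)` with `u = μ₁ p^(-λ) ≥ 1` and `v = (1 - μ₁)(1 - p)^(-λ)`.
Over `s ≤ a j + c` this is of order `(u^a v^(1-a))^j`. At `λ = 1`, `a = p` the base is
`exp (-KL(p ‖ μ₁)) < 1`, so by continuity it stays below `1` for `a` slightly above `p` and all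
`λ ∈ (1, λ₀)`. When `μ₁ = 1`, `X = j` and `G j = p^(j+1) ≤ α`.
-/

open Real

/-- The Binomial CDF `F^Bin_{n,p}(k) = Σ_{m=0}^{k} C(n,m) p^m (1−p)^{n−m}`. -/
noncomputable def binCdf (n : ℕ) (p : ℝ) (k : ℕ) : ℝ :=
  ∑ m ∈ Finset.range (k + 1), (n.choose m : ℝ) * p ^ m * (1 - p) ^ (n - m)

open Finset

noncomputable def binPmf (n : ℕ) (p : ℝ) (m : ℕ) : ℝ :=
  (n.choose m : ℝ) * p ^ m * (1 - p) ^ (n - m)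

section Binomial

variable {n k : ℕ} {p a : ℝ}

theorem binCdf_eq_sum_binPmf : binCdf n p k = ∑ m ∈ range (k + 1), binPmf n p m := rfl

theorem binPmf_nonneg (hp0 : 0 ≤ p) (hp1 : p ≤ 1) (m : ℕ) : 0 ≤ binPmf n p m := by
  have : 0 ≤ 1 - p := by linarith
  unfold binPmf; positivity

theorem binPmf_pos (hp0 : 0 < p) (hp1 : p < 1) (hk : k ≤ n) : 0 < binPmf n p k := by
  have : 0 < 1 - p := by linarith
  have := Nat.choose_pos hk
  unfold binPmf; positivity

theorem binPmf_one (n m : ℕ) : binPmf n 1 m = if m = n then 1 else 0 := by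
  unfold binPmf
  split_ifs with h
  · simp [h]
  · rcases lt_or_gt_of_ne h with h | h
    · simp [Nat.sub_ne_zero_of_lt h]
    · simp [Nat.choose_eq_zero_of_lt h]

theorem sum_binPmf (n : ℕ) (p : ℝ) : ∑ m ∈ range (n + 1), binPmf n p m = 1 := by
  calc ∑ m ∈ range (n + 1), binPmf n p m = (p + (1 - p)) ^ n := by
        rw [add_pow]
        exact sum_congr rfl fun m _ => by unfold binPmf; ring
    _ = 1 := by rw [add_sub_cancel, one_pow]

theorem binPmf_le_binCdf (hp0 : 0 ≤ p) (hp1 : p ≤ 1) : binPmf n p k ≤ binCdf n p k :=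
  single_le_sum (fun m _ => binPmf_nonneg hp0 hp1 m) (self_mem_range_succ k)

theorem one_sub_binCdf_eq (hk : k ≤ n) :
    1 - binCdf n p k = ∑ m ∈ Ico (k + 1) (n + 1), binPmf n p m := by
  rw [← sum_binPmf n p, binCdf_eq_sum_binPmf,
    ← sum_range_add_sum_Ico _ (by omega : k + 1 ≤ n + 1), add_sub_cancel_left]

theorem one_sub_binCdf_nonneg (hp0 : 0 ≤ p) (hp1 : p ≤ 1) (hk : k ≤ n) :
    0 ≤ 1 - binCdf n p k := by
  rw [one_sub_binCdf_eq hk]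
  exact sum_nonneg fun m _ => binPmf_nonneg hp0 hp1 m

theorem one_sub_binCdf_succ (n : ℕ) (p : ℝ) : 1 - binCdf (n + 1) p n = p ^ (n + 1) := by
  simp [one_sub_binCdf_eq (Nat.le_succ n), binPmf]

/-- Markov's inequality for `r ^ X`, `X ∼ Binomial(n, p)`. -/
theorem one_sub_binCdf_mul_pow_le (hp0 : 0 ≤ p) (hp1 : p ≤ 1) {r : ℝ} (hr : 1 ≤ r)
    (hk : k ≤ n) : (1 - binCdf n p k) * r ^ (k + 1) ≤ (1 - p + p * r) ^ n := by
  have hq : 0 ≤ 1 - p := by linarith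
  calc (1 - binCdf n p k) * r ^ (k + 1)
      = ∑ m ∈ Ico (k + 1) (n + 1), binPmf n p m * r ^ (k + 1) := by
        rw [one_sub_binCdf_eq hk, sum_mul]
    _ ≤ ∑ m ∈ Ico (k + 1) (n + 1), binPmf n p m * r ^ m :=
        sum_le_sum fun m hm => mul_le_mul_of_nonneg_left
          (pow_le_pow_right₀ hr (mem_Ico.1 hm).1) (binPmf_nonneg hp0 hp1 m)
    _ ≤ ∑ m ∈ range (n + 1), binPmf n p m * r ^ m :=
        sum_le_sum_of_subset_of_nonneg (fun m hm => mem_range.2 (mem_Ico.1 hm).2)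
          fun m _ _ => mul_nonneg (binPmf_nonneg hp0 hp1 m) (by positivity)
    _ = (1 - p + p * r) ^ n := by
        rw [show 1 - p + p * r = p * r + (1 - p) by ring, add_pow]
        exact sum_congr rfl fun m _ => by unfold binPmf; ring

theorem one_add_sub_le_div_rpow (hp : 0 < p) (hpa : p ≤ a) : 1 + (a - p) ≤ (a / p) ^ a := by
  have ha : 0 < a := hp.trans_le hpa
  have hlog : a - p ≤ a * log (a / p) := by
    have h := mul_le_mul_of_nonneg_left (log_le_sub_one_of_pos (div_pos hp ha)) ha.le
    nth_rewrite 1 [← inv_div] at h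
    rw [log_inv, mul_sub, mul_div_cancel₀ p ha.ne'] at h
    linarith
  calc 1 + (a - p) ≤ exp (a - p) := by linarith [add_one_le_exp (a - p)]
    _ ≤ exp (log (a / p) * a) := exp_le_exp.2 (by linarith)
    _ = (a / p) ^ a := (rpow_def_of_pos (div_pos ha hp) a).symm

/-- Chernoff's bound with tilt `a / p`, in the weak form `log (1 + a - p) ≤ a log (a / p)`. -/
theorem one_sub_binCdf_le_rpow (hp0 : 0 < p) (hp1 : p ≤ 1) (hpa : p ≤ a) (hk : k ≤ n) :
    1 - binCdf n p k ≤ (a / p) ^ (a * n - (k + 1)) := by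
  have hr0 : 0 < a / p := div_pos (hp0.trans_le hpa) hp0
  have hr1 : 1 ≤ a / p := (one_le_div hp0).2 hpa
  have hmarkov := one_sub_binCdf_mul_pow_le hp0.le hp1 hr1 hk
  rw [mul_div_cancel₀ a hp0.ne', sub_add_eq_add_sub, add_sub_assoc] at hmarkov
  rw [rpow_sub hr0, le_div_iff₀ (rpow_pos_of_pos hr0 _), rpow_mul hr0.le]
  exact_mod_cast hmarkov.trans (pow_le_pow_left₀ (by linarith) (one_add_sub_le_div_rpow hp0 hpa) n)

theorem add_one_lt_of_lt_one_sub_binCdf {A : ℝ} (hA : 0 < A) (hp0 : 0 < p) (hp1 : p ≤ 1)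
    (hpa : p < a) (hk : k ≤ n) (hAk : A < 1 - binCdf n p k) :
    (k : ℝ) + 1 < a * n - log A / log (a / p) := by
  have hlog : 0 < log (a / p) := log_pos ((one_lt_div hp0).2 hpa)
  have h := hAk.trans_le (one_sub_binCdf_le_rpow hp0 hp1 hpa.le hk)
  rw [lt_rpow_iff_log_lt hA (div_pos (hp0.trans hpa) hp0), ← div_lt_iff₀ hlog] at h
  linarith

end Binomial

theorem exp_neg_le_div_rpow {t lam : ℝ} (ht : 0 < t) (hlam : 0 < lam) :
    exp (-t) ≤ (lam / t) ^ lam := by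
  have h : (t / lam) ^ lam ≤ exp t := by
    calc (t / lam) ^ lam ≤ exp (t / lam) ^ lam :=
          rpow_le_rpow (by positivity) (by linarith [add_one_le_exp (t / lam)]) hlam.le
      _ = exp t := by rw [← exp_mul, div_mul_cancel₀ t hlam.ne']
  rw [exp_neg, ← inv_div, inv_rpow (by positivity)]
  exact inv_anti₀ (by positivity) h

theorem one_sub_rpow_le_div_rpow {F x lam : ℝ} (hF0 : 0 < F) (hF1 : F ≤ 1) (hx : 0 < x)
    (hlam : 0 < lam) : (1 - F) ^ x ≤ (lam / (F * x)) ^ lam :=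
  calc (1 - F) ^ x ≤ exp (-F) ^ x :=
        rpow_le_rpow (by linarith) (by linarith [add_one_le_exp (-F)]) hx.le
    _ = exp (-(F * x)) := by rw [← exp_mul, neg_mul]
    _ ≤ (lam / (F * x)) ^ lam := exp_neg_le_div_rpow (by positivity) hlam

theorem pow_mul_pow_sub_le_exp {u v a c : ℝ} {j s : ℕ} (hv : 0 < v) (hvu : v ≤ u) (hs : s ≤ j)
    (hsc : (s : ℝ) ≤ a * j + c) :
    u ^ s * v ^ (j - s) ≤ exp (j * (a * log u + (1 - a) * log v) + c * log (u / v)) := by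
  have hu : 0 < u := hv.trans_le hvu
  have hlog : 0 ≤ (a * j + c - s) * (log u - log v) :=
    mul_nonneg (by linarith) (sub_nonneg.2 (log_le_log hv hvu))
  calc u ^ s * v ^ (j - s) = exp (s * log u + ((j - s : ℕ) : ℝ) * log v) := by
        rw [exp_add, exp_nat_mul, exp_nat_mul, exp_log hu, exp_log hv]
    _ ≤ _ := by
        rw [exp_le_exp, log_div hu.ne' hv.ne', Nat.cast_sub hs]
        linarith

theorem add_one_mul_exp_neg_le {t κ : ℝ} (ht : 0 ≤ t) (hκ : 0 < κ) :
    (t + 1) * exp (-t * κ) ≤ (1 + 2 / κ) * exp (-t * (κ / 2)) := by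
  have hlin : t + 1 ≤ (1 + 2 / κ) * exp (t * (κ / 2)) := by
    have h := add_one_le_exp (t * (κ / 2))
    have : (1 + 2 / κ) * (t * (κ / 2) + 1) = t + 1 + t * (κ / 2) + 2 / κ := by
      field_simp; ring
    nlinarith [div_pos two_pos hκ]
  calc (t + 1) * exp (-t * κ) ≤ (1 + 2 / κ) * exp (t * (κ / 2)) * exp (-t * κ) :=
        mul_le_mul_of_nonneg_right hlin (exp_pos _).le
    _ = (1 + 2 / κ) * exp (-t * (κ / 2)) := by rw [mul_assoc, ← exp_add]; ring_nf

theorem mul_log_div_add_mul_log_div_neg {p q : ℝ} (hp0 : 0 < p) (hp1 : p < 1) (hq0 : 0 < q)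
    (hq1 : q < 1) (hpq : p ≠ q) : p * log (q / p) + (1 - p) * log ((1 - q) / (1 - p)) < 0 := by
  have hp1' : 0 < 1 - p := by linarith
  have h₁ : p * log (q / p) < q - p := by
    have := mul_lt_mul_of_pos_left (log_lt_sub_one_of_pos (div_pos hq0 hp0)
      (by rwa [ne_eq, div_eq_one_iff_eq hp0.ne', eq_comm])) hp0
    rwa [mul_sub, mul_div_cancel₀ q hp0.ne', mul_one] at this
  have h₂ : (1 - p) * log ((1 - q) / (1 - p)) ≤ p - q := by
    have := mul_le_mul_of_nonneg_left (log_le_sub_one_of_pos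
      (div_pos (by linarith : 0 < 1 - q) hp1')) hp1'.le
    rw [mul_sub, mul_div_cancel₀ _ hp1'.ne', mul_one] at this
    linarith
  linarith

theorem binPmf_mul_binCdf_rpow_neg_le {j s : ℕ} {μ p lam : ℝ} (hμ0 : 0 ≤ μ) (hμ1 : μ ≤ 1)
    (hp0 : 0 < p) (hp1 : p < 1) (hlam : 1 ≤ lam) (hs : s ≤ j) :
    binPmf j μ s * binCdf (j + 1) p s ^ (-lam) ≤
      (1 - p) ^ (-lam) * (μ * p ^ (-lam)) ^ s * ((1 - μ) * (1 - p) ^ (-lam)) ^ (j - s) := by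
  have hq : 0 < 1 - p := by linarith
  have hμ' : 0 ≤ 1 - μ := by linarith
  have hC : (1 : ℝ) ≤ j.choose s := Nat.one_le_cast.2 (Nat.choose_pos hs)
  have hPF : (j.choose s : ℝ) * p ^ s * (1 - p) ^ (j - s) * (1 - p) ≤ binCdf (j + 1) p s := by
    refine le_trans ?_ (binPmf_le_binCdf hp0.le hp1.le)
    rw [binPmf, show j + 1 - s = j - s + 1 by omega, pow_succ, ← mul_assoc]
    gcongr
    omega
  have hCC : (j.choose s : ℝ) * (j.choose s : ℝ) ^ (-lam) ≤ 1 := by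
    have hpos : (0 : ℝ) < j.choose s := by positivity
    calc _ = (j.choose s : ℝ) ^ (1 + -lam) := by rw [rpow_add hpos, rpow_one]
      _ ≤ 1 := rpow_le_one_of_one_le_of_nonpos hC (by linarith)
  have hR : 0 ≤ (1 - p) ^ (-lam) * (μ * p ^ (-lam)) ^ s *
      ((1 - μ) * (1 - p) ^ (-lam)) ^ (j - s) := by
    positivity
  calc binPmf j μ s * binCdf (j + 1) p s ^ (-lam)
      ≤ binPmf j μ s * ((j.choose s : ℝ) * p ^ s * (1 - p) ^ (j - s) * (1 - p)) ^ (-lam) :=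
        mul_le_mul_of_nonneg_left (rpow_le_rpow_of_nonpos (by positivity) hPF (by linarith))
          (binPmf_nonneg hμ0 hμ1 s)
    _ = (j.choose s : ℝ) * (j.choose s : ℝ) ^ (-lam) *
          ((1 - p) ^ (-lam) * (μ * p ^ (-lam)) ^ s * ((1 - μ) * (1 - p) ^ (-lam)) ^ (j - s)) := by
        rw [mul_rpow (by positivity) hq.le, mul_rpow (by positivity) (by positivity),
          mul_rpow (by positivity) (by positivity), ← rpow_pow_comm hp0.le,
          ← rpow_pow_comm hq.le, binPmf, mul_pow, mul_pow]
        ring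
    _ ≤ _ := mul_le_of_le_one_left hR hCC

theorem binPmf_mul_one_sub_binCdf_rpow_le {j s : ℕ} {μ p lam x : ℝ} (hμ0 : 0 ≤ μ)
    (hμ1 : μ ≤ 1) (hp0 : 0 < p) (hp1 : p < 1) (hlam : 1 ≤ lam) (hs : s ≤ j) (hx : 0 < x) :
    binPmf j μ s * (1 - binCdf (j + 1) p s) ^ x ≤
      lam ^ lam * ((1 - p) ^ (-lam) * (μ * p ^ (-lam)) ^ s *
        ((1 - μ) * (1 - p) ^ (-lam)) ^ (j - s)) / x ^ lam := by
  have hsj : s ≤ j + 1 := by omega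
  have hF0 : 0 < binCdf (j + 1) p s :=
    (binPmf_pos hp0 hp1 hsj).trans_le (binPmf_le_binCdf hp0.le hp1.le)
  have hF1 : binCdf (j + 1) p s ≤ 1 := by
    linarith [one_sub_binCdf_nonneg hp0.le hp1.le hsj]
  calc binPmf j μ s * (1 - binCdf (j + 1) p s) ^ x
      ≤ binPmf j μ s * (lam / (binCdf (j + 1) p s * x)) ^ lam :=
        mul_le_mul_of_nonneg_left (one_sub_rpow_le_div_rpow hF0 hF1 hx (by linarith))
          (binPmf_nonneg hμ0 hμ1 s)
    _ = lam ^ lam * (binPmf j μ s * binCdf (j + 1) p s ^ (-lam)) / x ^ lam := by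
        rw [div_rpow (by linarith) (by positivity), mul_rpow hF0.le hx.le, rpow_neg hF0.le]
        field_simp
    _ ≤ _ := by
        gcongr lam ^ lam * ?_ / _
        exact binPmf_mul_binCdf_rpow_neg_le hμ0 hμ1 hp0 hp1 hlam hs

/-- `likelihoodRate μ p lam a = a * log u + (1 - a) * log v` for `u = μ * p ^ (-lam)` and
`v = (1 - μ) * (1 - p) ^ (-lam)`, the two bases in `binPmf_mul_binCdf_rpow_neg_le`: it is the
exponential rate in `j` of that bound at `s = a * j`. -/
noncomputable def likelihoodRate (μ p lam a : ℝ) : ℝ :=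
  a * (log μ - lam * log p) + (1 - a) * (log (1 - μ) - lam * log (1 - p))

theorem exists_likelihoodRate_neg {μ p : ℝ} (hp : 0 < p) (hpμ : p < μ) (hμ : μ < 1) :
    ∃ a, p < a ∧ a < 1 ∧
      ∃ lam₀ > 1, ∀ lam, 1 < lam → lam < lam₀ → likelihoodRate μ p lam a < 0 := by
  have hcont : Continuous fun q : ℝ × ℝ => likelihoodRate μ p q.1 q.2 := by
    unfold likelihoodRate; fun_prop
  have hneg : likelihoodRate μ p 1 p < 0 := by
    have h := mul_log_div_add_mul_log_div_neg hp (hpμ.trans hμ) (hp.trans hpμ) hμ hpμ.ne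
    rw [log_div (hp.trans hpμ).ne' hp.ne', log_div (by linarith) (by linarith)] at h
    unfold likelihoodRate
    linarith
  obtain ⟨ε, hε, hball⟩ :=
    Metric.eventually_nhds_iff.1 ((hcont.tendsto (1, p)).eventually_lt_const hneg)
  have hεp := min_le_left ε (1 - p)
  have hε1 := min_le_right ε (1 - p)
  have hmin : 0 < min ε (1 - p) := lt_min hε (by linarith)
  refine ⟨p + min ε (1 - p) / 2, by linarith, by linarith, 1 + ε, by linarith,
    fun lam h1 h2 => hball (y := (lam, _)) ?_⟩
  rw [Prod.dist_eq, max_lt_iff, Real.dist_eq, Real.dist_eq, abs_lt, abs_lt]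
  exact ⟨⟨by linarith, by linarith⟩, by linarith, by linarith⟩

theorem exists_binPmf_mul_rpow_le_of_lt_one_sub_binCdf {μ p a lam A : ℝ} (hp : 0 < p)
    (hpa : p < a) (ha : a < 1) (hpμ : p ≤ μ) (hμ : μ < 1) (hlam : 1 ≤ lam) (hA : 0 < A)
    (hrate : likelihoodRate μ p lam a < 0) :
    ∃ K > 0, ∀ j s : ℕ, s ≤ j → ∀ x : ℝ, 0 < x → A < 1 - binCdf (j + 1) p s →
      binPmf j μ s * (1 - binCdf (j + 1) p s) ^ x ≤
        K * exp (j * likelihoodRate μ p lam a) / x ^ lam := by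
  have hp1 : p < 1 := hpa.trans ha
  have hq : 0 < 1 - p := by linarith
  have hμ0 : 0 < μ := hp.trans_le hpμ
  set u := μ * p ^ (-lam)
  set v := (1 - μ) * (1 - p) ^ (-lam)
  have hu0 : 0 < u := by positivity
  have hv0 : 0 < v := mul_pos (by linarith) (by positivity)
  have hlogu : log u = log μ - lam * log p := by
    rw [log_mul hμ0.ne' (by positivity), log_rpow hp]; ring
  have hlogv : log v = log (1 - μ) - lam * log (1 - p) := by
    rw [log_mul (by linarith) (by positivity), log_rpow hq]; ring
  have hrate' : a * log u + (1 - a) * log v = likelihoodRate μ p lam a := by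
    rw [hlogu, hlogv]; rfl
  -- `u ≥ 1` since `μ ≥ p` and `lam ≥ 1`; then `hrate` forces `v < 1`.
  have hlogu0 : 0 ≤ log u := by
    rw [hlogu]; nlinarith [log_le_log hp hpμ, log_neg hp hp1]
  have hvu : v ≤ u := by
    rw [← log_le_log_iff hv0 hu0]
    rw [← hrate'] at hrate
    nlinarith
  set c := -log A / log (a / p)
  refine ⟨lam ^ lam * (1 - p) ^ (-lam) * exp (c * log (u / v)), by positivity,
    fun j s hs x hx hAs => ?_⟩
  have hsc : (s : ℝ) ≤ a * j + c := by
    have h := add_one_lt_of_lt_one_sub_binCdf hA hp hp1.le hpa (by omega) hAs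
    push_cast at h
    linarith [neg_div (log (a / p)) (log A)]
  calc binPmf j μ s * (1 - binCdf (j + 1) p s) ^ x
      ≤ lam ^ lam * ((1 - p) ^ (-lam) * u ^ s * v ^ (j - s)) / x ^ lam :=
        binPmf_mul_one_sub_binCdf_rpow_le hμ0.le hμ.le hp hp1 hlam hs hx
    _ ≤ lam ^ lam * ((1 - p) ^ (-lam) *
          exp (j * likelihoodRate μ p lam a + c * log (u / v))) / x ^ lam := by
        rw [mul_assoc _ (u ^ s), ← hrate']
        gcongr
        exact pow_mul_pow_sub_le_exp hv0 hvu hs hsc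
    _ = _ := by rw [exp_add]; ring

theorem sum_le_add_card_mul {ι : Type*} {S : Finset ι} {w f : ι → ℝ} {A B : ℝ}
    (hw : ∑ s ∈ S, w s ≤ 1) (hA : 0 ≤ A)
    (hf : ∀ s ∈ S, f s ≤ w s * A + B) : ∑ s ∈ S, f s ≤ A + #S * B :=
  calc ∑ s ∈ S, f s ≤ ∑ s ∈ S, (w s * A + B) := sum_le_sum hf
    _ = (∑ s ∈ S, w s) * A + #S * B := by rw [sum_add_distrib, sum_mul, sum_const, nsmul_eq_mul]
    _ ≤ A + #S * B := by nlinarith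

theorem exists_sum_binPmf_mul_rpow_le {μ p a lam A : ℝ} (hp : 0 < p) (hpa : p < a) (ha : a < 1)
    (hpμ : p ≤ μ) (hμ : μ < 1) (hlam : 1 ≤ lam) (hA : 0 < A)
    (hrate : likelihoodRate μ p lam a < 0) :
    ∃ C > 0, ∃ d > 0, ∀ j : ℕ, ∀ x : ℝ, 0 < x →
      ∑ s ∈ range (j + 1), binPmf j μ s * (1 - binCdf (j + 1) p s) ^ x ≤
        A ^ x + C * exp (-(j : ℝ) * d) / x ^ lam := by
  obtain ⟨K, hK, hbad⟩ :=
    exists_binPmf_mul_rpow_le_of_lt_one_sub_binCdf hp hpa ha hpμ hμ hlam hA hrate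
  set κ := -likelihoodRate μ p lam a
  have hκ : 0 < κ := neg_pos.2 hrate
  refine ⟨K * (1 + 2 / κ), by positivity, κ / 2, by positivity, fun j x hx => ?_⟩
  have hp1 : p < 1 := hpa.trans ha
  have hT (s : ℕ) : 0 ≤ binPmf j μ s := binPmf_nonneg (hp.trans_le hpμ).le hμ.le s
  have hterm : ∀ s ∈ range (j + 1), binPmf j μ s * (1 - binCdf (j + 1) p s) ^ x ≤
      binPmf j μ s * A ^ x + K * exp (-(j : ℝ) * κ) / x ^ lam := by
    intro s hs
    have hsj : s ≤ j := Nat.lt_succ_iff.1 (mem_range.1 hs)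
    rcases le_or_gt (1 - binCdf (j + 1) p s) A with hsmall | hlarge
    · have : binPmf j μ s * (1 - binCdf (j + 1) p s) ^ x ≤ binPmf j μ s * A ^ x :=
        mul_le_mul_of_nonneg_left
          (rpow_le_rpow (one_sub_binCdf_nonneg hp.le hp1.le (by omega)) hsmall hx.le) (hT s)
      have : 0 ≤ K * exp (-(j : ℝ) * κ) / x ^ lam := by positivity
      linarith
    · have := hbad j s hsj x hx hlarge
      rw [show (j : ℝ) * likelihoodRate μ p lam a = -(j : ℝ) * κ by ring] at this
      have : 0 ≤ binPmf j μ s * A ^ x := mul_nonneg (hT s) (by positivity)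
      linarith
  calc _ ≤ A ^ x + #(range (j + 1)) * (K * exp (-(j : ℝ) * κ) / x ^ lam) :=
        sum_le_add_card_mul (sum_binPmf j μ).le (by positivity) hterm
    _ = A ^ x + K * (((j : ℝ) + 1) * exp (-(j : ℝ) * κ)) / x ^ lam := by
        rw [card_range]; push_cast; ring
    _ ≤ A ^ x + K * ((1 + 2 / κ) * exp (-(j : ℝ) * (κ / 2))) / x ^ lam := by
        gcongr A ^ x + K * ?_ / _
        exact add_one_mul_exp_neg_le (Nat.cast_nonneg j) hκ
    _ = _ := by ring

theorem le_half_rpow_one_sub {p : ℝ} (hp0 : 0 < p) (hp1 : p ≤ 1) : p ≤ (1 / 2) ^ (1 - p) := by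
  rw [le_rpow_iff_log_le hp0 (by norm_num), one_div, log_inv]
  nlinarith [log_le_sub_one_of_pos hp0, log_two_lt_d9]

theorem sum_binPmf_one_mul_rpow_le {p x : ℝ} (hp0 : 0 < p) (hp1 : p ≤ 1) (hx : 0 ≤ x) (j : ℕ) :
    ∑ s ∈ range (j + 1), binPmf j 1 s * (1 - binCdf (j + 1) p s) ^ x ≤
      ((1 / 2) ^ (1 - p)) ^ x := by
  simp only [binPmf_one, ite_mul, one_mul, zero_mul, sum_ite_eq', mem_range, lt_add_one,
    if_true, one_sub_binCdf_succ]
  exact rpow_le_rpow (by positivity)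
    ((pow_le_of_le_one hp0.le hp1 j.succ_ne_zero).trans (le_half_rpow_one_sub hp0 hp1)) hx

theorem binomial_tail_power_bound_general (μ₁ μ₂ : ℝ) (hμ₁ : μ₁ ∈ Set.Icc (0 : ℝ) 1) (δ : ℝ)
    (h0 : 0 < μ₂ + δ) (h1 : μ₂ + δ < μ₁) :
    ∃ lam₀ : ℝ, 1 < lam₀ ∧
      ∀ lam : ℝ, 1 < lam → lam < lam₀ →
        ∃ C > (0 : ℝ), ∃ d > (0 : ℝ),
          ∀ j : ℕ, 0 < j → ∀ x : ℝ, 1 ≤ x →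
            ∑ s ∈ Finset.range (j + 1),
                (j.choose s : ℝ) * μ₁ ^ s * (1 - μ₁) ^ (j - s) *
                  (1 - binCdf (j + 1) (μ₂ + δ) s) ^ x ≤
              (((1 : ℝ) / 2) ^ (1 - μ₂ - δ)) ^ x +
                C * Real.exp (-(j : ℝ) * d) / x ^ lam := by
  rw [sub_sub]
  rcases hμ₁.2.eq_or_lt with rfl | hμ₁1
  · refine ⟨2, one_lt_two, fun lam _ _ => ⟨1, one_pos, 1, one_pos, fun j _ x hx => ?_⟩⟩
    exact (sum_binPmf_one_mul_rpow_le h0 h1.le (by linarith) j).trans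
      (le_add_of_nonneg_right (by positivity))
  · obtain ⟨a, hpa, ha1, lam₀, hlam₀, hrate⟩ := exists_likelihoodRate_neg h0 h1 hμ₁1
    refine ⟨lam₀, hlam₀, fun lam hlam hlam₀ => ?_⟩
    obtain ⟨C, hC, d, hd, hsum⟩ := exists_sum_binPmf_mul_rpow_le h0 hpa ha1 h1.le hμ₁1 hlam.le
      (by positivity : (0 : ℝ) < (1 / 2) ^ (1 - (μ₂ + δ))) (hrate lam hlam hlam₀)
    exact ⟨C, hC, d, hd, fun j _ x hx => hsum j x (by linarith)⟩

/-- Lemma extracted from the proof of Lemma 3 of Agrawal–Goyal: if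
`0 < μ₂ + δ < μ₁`, there is `λ₀ > 1` such that for every `λ ∈ (1, λ₀)` there are
constants `C, d > 0` with
`E[(1 − F^Bin_{j+1, μ₂+δ}(X))^x] ≤ α^x + C exp(−j d)/x^λ` for all `j ≥ 1`, `x ≥ 1`,
where `X ∼ Binomial(j, μ₁)` and `α = (1/2)^{1−μ₂−δ}`. -/
theorem binomial_tail_power_bound (μ₁ μ₂ : ℝ) (hμ₁ : μ₁ ∈ Set.Icc (0 : ℝ) 1)
    (hμ₂ : μ₂ ∈ Set.Icc (0 : ℝ) 1) (δ : ℝ) (hδ : 0 < δ)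
    (h0 : 0 < μ₂ + δ) (h1 : μ₂ + δ < μ₁) :
    ∃ lam₀ : ℝ, 1 < lam₀ ∧
      ∀ lam : ℝ, 1 < lam → lam < lam₀ →
        ∃ C > (0 : ℝ), ∃ d > (0 : ℝ),
          ∀ j : ℕ, 0 < j → ∀ x : ℝ, 1 ≤ x →
            ∑ s ∈ Finset.range (j + 1),
                (j.choose s : ℝ) * μ₁ ^ s * (1 - μ₁) ^ (j - s) *
                  (1 - binCdf (j + 1) (μ₂ + δ) s) ^ x ≤
              (((1 : ℝ) / 2) ^ (1 - μ₂ - δ)) ^ x +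
                C * Real.exp (-(j : ℝ) * d) / x ^ lam :=
  binomial_tail_power_bound_general μ₁ μ₂ hμ₁ δ h0 h1
end
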